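/- Let g ∈ ℂ^M be a window and Λ = F × ℤ_M for some nonempty F ⊆ ℤ_M. Set A = M·min_{m∈ℤ_M} Σ_{k∈F}|g(m−k)|² and B = M·max_{m∈ℤ_M} Σ_{k∈F}|g(m−k)|². Then for every x ∈ ℂ^M, A·‖x‖₂² ≤ Σ_{(k,ℓ)∈Λ} |⟨x, π(k,ℓ)g⟩|² ≤ B·‖x‖₂², and these bounds are optimal: there exist nonzero x, x' ∈ ℂ^M with Σ_{λ∈Λ}|⟨x,π(λ)g⟩|² = A·‖x‖₂² and Σ_{λ∈Λ}|⟨x',π(λ)g⟩|² = B·‖x'‖₂². -/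

import Mathlib

/-! For fixed `k`, `⟨x, π(k,ℓ) g⟩` is the discrete Fourier transform at `ℓ` of
`m ↦ x(m) · conj (g (m - k))`, so by Parseval the sum over all `ℓ ∈ ℤ_M` is
`M · ∑ₘ |x(m)|² |g(m - k)|²`. Hence the frame operator of `F × ℤ_M` is multiplication by
`w(m) = M · ∑_{k ∈ F} |g(m - k)|²`, whose quadratic form lies between `min w · ‖x‖²` and
`max w · ‖x‖²`, with equality at the unit vectors supported where `w` is extremal. -/

open MeasureTheory ProbabilityTheory Complex Finset
open scoped Real BigOperators Classical

noncomputable section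

/-- Time–frequency shift `π(k,ℓ) g = M_ℓ T_k g`. -/
def tfShift (M : ℕ) (k l : ZMod M) (g : ZMod M → ℂ) : ZMod M → ℂ :=
  fun m => Complex.exp (2 * (Real.pi : ℂ) * Complex.I * (l.val : ℂ) * (m.val : ℂ) / (M : ℂ)) *
    g (m - k)

/-- Squared ℓ²-norm on ℂ^M. -/
def nsq (M : ℕ) [NeZero M] (x : ZMod M → ℂ) : ℝ :=
  ∑ m : ZMod M, ‖x m‖ ^ 2

/-- Inner product ⟨x,y⟩ = ∑ x(m)·conj(y(m)). -/
def inn (M : ℕ) [NeZero M] (x y : ZMod M → ℂ) : ℂ :=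
  ∑ m : ZMod M, x m * (starRingEnd ℂ) (y m)

/-- Frame operator Φ_Λ Φ_Λ^* of the Gabor system (g, Λ). -/
def frameOp (M : ℕ) [NeZero M] (Λ : Finset (ZMod M × ZMod M)) (g : ZMod M → ℂ) :
    Matrix (ZMod M) (ZMod M) ℂ :=
  fun m1 m2 => ∑ kl ∈ Λ,
    tfShift M kl.1 kl.2 g m1 * (starRingEnd ℂ) (tfShift M kl.1 kl.2 g m2)

/-- A Steinhaus window: g(m) = M^{-1/2} e^{2πi y_m} with y_m i.i.d. uniform on [0,1). -/
def IsSteinhaus (M : ℕ) {Ω : Type*} [MeasurableSpace Ω] (P : Measure Ω)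
    (g : Ω → ZMod M → ℂ) : Prop :=
  ∃ y : ZMod M → Ω → ℝ,
    (∀ m, Measurable (y m)) ∧
    iIndepFun y P ∧
    (∀ m, Measure.map (y m) P = volume.restrict (Set.Ico (0 : ℝ) 1)) ∧
    (∀ ω m, g ω m = (1 / Real.sqrt M : ℝ) *
      Complex.exp (2 * (Real.pi : ℂ) * Complex.I * (y m ω)))

/-- A complex Gaussian window g ~ CN(0, (1/M) I_M): the 2M real coordinates are
independent centered Gaussians of variance 1/(2M). -/
def IsGaussianWindow (M : ℕ) {Ω : Type*} [MeasurableSpace Ω] (P : Measure Ω)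
    (g : Ω → ZMod M → ℂ) : Prop :=
  ∃ u : ZMod M × Bool → Ω → ℝ,
    (∀ i, Measurable (u i)) ∧
    iIndepFun u P ∧
    (∀ i, Measure.map (u i) P = gaussianReal 0 (1 / (2 * M) : NNReal)) ∧
    (∀ ω m, g ω m = (u (m, false) ω : ℂ) + (u (m, true) ω : ℂ) * Complex.I)

namespace ZMod

open scoped ComplexConjugate

variable {N : ℕ} [NeZero N]

theorem sum_norm_sq_dft (Φ : ZMod N → ℂ) : ∑ k, ‖𝓕 Φ k‖ ^ 2 = N * ∑ j, ‖Φ j‖ ^ 2 := by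
  apply Complex.ofReal_injective
  push_cast
  simp_rw [← Complex.mul_conj', dft_apply, smul_eq_mul, map_sum, map_mul,
    ← AddChar.map_neg_eq_conj, neg_neg, Finset.sum_mul_sum, Finset.mul_sum]
  rw [Finset.sum_comm]
  refine Finset.sum_congr rfl fun j _ => ?_
  rw [Finset.sum_comm]
  have orthogonality (j' : ZMod N) :
      ∑ k, stdAddChar (-(j * k)) * Φ j * (stdAddChar (j' * k) * conj (Φ j')) =
        Φ j * conj (Φ j') * if j' - j = 0 then (N : ℂ) else 0 := by
    have h := AddChar.sum_mulShift (j' - j) (isPrimitive_stdAddChar N)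
    rw [ZMod.card, Nat.cast_ite, Nat.cast_zero] at h
    rw [← h, Finset.mul_sum]
    refine Finset.sum_congr rfl fun k _ => ?_
    rw [show k * (j' - j) = -(j * k) + j' * k by ring, AddChar.map_add_eq_mul]
    ring
  simp_rw [orthogonality, sub_eq_zero]
  simp [mul_comm]

end ZMod

section WeightedSum

variable {ι : Type*} [Fintype ι] {w : ι → ℝ}

theorem mul_sum_norm_sq_le_of_le {a : ℝ} (h : ∀ i, a ≤ w i) (x : ι → ℂ) :
    a * ∑ i, ‖x i‖ ^ 2 ≤ ∑ i, ‖x i‖ ^ 2 * w i := by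
  rw [Finset.mul_sum]
  exact Finset.sum_le_sum fun i _ => by rw [mul_comm]; gcongr; exact h i

theorem sum_norm_sq_mul_le_of_le {b : ℝ} (h : ∀ i, w i ≤ b) (x : ι → ℂ) :
    ∑ i, ‖x i‖ ^ 2 * w i ≤ b * ∑ i, ‖x i‖ ^ 2 := by
  rw [Finset.mul_sum]
  exact Finset.sum_le_sum fun i _ => by rw [mul_comm b]; gcongr; exact h i

theorem sum_norm_sq_single_mul [DecidableEq ι] (w : ι → ℝ) (i₀ : ι) :
    ∑ i, ‖(Pi.single i₀ 1 : ι → ℂ) i‖ ^ 2 * w i = w i₀ := by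
  rw [Finset.sum_eq_single i₀ (fun i _ hi => by simp [hi]) (by simp)]
  simp

end WeightedSum

section Gabor

open scoped ComplexConjugate ZMod

variable {M : ℕ} [NeZero M]

theorem tfShift_apply_eq_stdAddChar (k l : ZMod M) (g : ZMod M → ℂ) (m : ZMod M) :
    tfShift M k l g m = ZMod.stdAddChar (l * m) * g (m - k) := by
  rw [tfShift, show l * m = ((l.val * m.val : ℕ) : ZMod M) by simp, ZMod.stdAddChar_apply,
    ZMod.toCircle_natCast]
  push_cast
  ring_nf

theorem inn_tfShift_eq_dft (x g : ZMod M → ℂ) (k l : ZMod M) :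
    inn M x (tfShift M k l g) = 𝓕 (fun m => x m * conj (g (m - k))) l := by
  simp only [inn, ZMod.dft_apply, tfShift_apply_eq_stdAddChar, smul_eq_mul, map_mul,
    ← AddChar.map_neg_eq_conj, mul_comm l]
  exact Finset.sum_congr rfl fun m _ => by ring

theorem sum_norm_sq_inn_tfShift (x g : ZMod M → ℂ) (k : ZMod M) :
    ∑ l, ‖inn M x (tfShift M k l g)‖ ^ 2 = M * ∑ m, ‖x m‖ ^ 2 * ‖g (m - k)‖ ^ 2 := by
  simp only [inn_tfShift_eq_dft, ZMod.sum_norm_sq_dft, norm_mul, RCLike.norm_conj, mul_pow]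

theorem sum_norm_sq_inn_tfShift_product_univ (x g : ZMod M → ℂ) (F : Finset (ZMod M)) :
    ∑ kl ∈ F ×ˢ (Finset.univ : Finset (ZMod M)), ‖inn M x (tfShift M kl.1 kl.2 g)‖ ^ 2 =
      ∑ m, ‖x m‖ ^ 2 * (M * ∑ k ∈ F, ‖g (m - k)‖ ^ 2) := by
  simp only [Finset.sum_product, sum_norm_sq_inn_tfShift, Finset.mul_sum]
  rw [Finset.sum_comm]
  exact Finset.sum_congr rfl fun m _ => Finset.sum_congr rfl fun k _ => by ring

theorem nsq_single (m : ZMod M) : nsq M (Pi.single m 1) = 1 := by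
  simpa [nsq] using sum_norm_sq_single_mul (fun _ => (1 : ℝ)) m

end Gabor

theorem stmt9_general (M : ℕ) [NeZero M] (g : ZMod M → ℂ) (F : Finset (ZMod M))
    (A B : ℝ)
    (hA : A = (M : ℝ) * Finset.univ.inf' ⟨(0 : ZMod M), Finset.mem_univ _⟩
      (fun m : ZMod M => ∑ k ∈ F, ‖g (m - k)‖ ^ 2))
    (hB : B = (M : ℝ) * Finset.univ.sup' ⟨(0 : ZMod M), Finset.mem_univ _⟩
      (fun m : ZMod M => ∑ k ∈ F, ‖g (m - k)‖ ^ 2)) :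
    (∀ x : ZMod M → ℂ,
        A * nsq M x ≤
            ∑ kl ∈ F ×ˢ (Finset.univ : Finset (ZMod M)),
              ‖inn M x (tfShift M kl.1 kl.2 g)‖ ^ 2 ∧
          ∑ kl ∈ F ×ˢ (Finset.univ : Finset (ZMod M)),
              ‖inn M x (tfShift M kl.1 kl.2 g)‖ ^ 2 ≤ B * nsq M x) ∧
      (∃ x : ZMod M → ℂ, x ≠ 0 ∧
        ∑ kl ∈ F ×ˢ (Finset.univ : Finset (ZMod M)),
            ‖inn M x (tfShift M kl.1 kl.2 g)‖ ^ 2 = A * nsq M x) ∧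
      (∃ x' : ZMod M → ℂ, x' ≠ 0 ∧
        ∑ kl ∈ F ×ˢ (Finset.univ : Finset (ZMod M)),
            ‖inn M x' (tfShift M kl.1 kl.2 g)‖ ^ 2 = B * nsq M x') := by
  set f : ZMod M → ℝ := fun m => ∑ k ∈ F, ‖g (m - k)‖ ^ 2
  obtain ⟨m₀, -, hm₀⟩ := Finset.exists_mem_eq_inf' ⟨0, Finset.mem_univ _⟩ f
  obtain ⟨m₁, -, hm₁⟩ := Finset.exists_mem_eq_sup' ⟨0, Finset.mem_univ _⟩ f
  have hA_le (m : ZMod M) : A ≤ M * f m := hA ▸ by gcongr; exact Finset.inf'_le f (mem_univ m)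
  have hle_B (m : ZMod M) : M * f m ≤ B := hB ▸ by gcongr; exact Finset.le_sup' f (mem_univ m)
  simp only [sum_norm_sq_inn_tfShift_product_univ]
  refine ⟨fun x => ⟨mul_sum_norm_sq_le_of_le hA_le x, sum_norm_sq_mul_le_of_le hle_B x⟩,
    ⟨Pi.single m₀ 1, by simp, ?_⟩, ⟨Pi.single m₁ 1, by simp, ?_⟩⟩
  · rw [sum_norm_sq_single_mul, nsq_single, hA, hm₀, mul_one]
  · rw [sum_norm_sq_single_mul, nsq_single, hB, hm₁, mul_one]

/-- For Λ = F × ℤ_M, A = M·min_m Σ_{k∈F}|g(m−k)|² and B = M·max_m Σ_{k∈F}|g(m−k)|²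
are frame bounds for (g,Λ), and they are attained (optimal). -/
theorem stmt9 (M : ℕ) [NeZero M] (g : ZMod M → ℂ) (F : Finset (ZMod M)) (hF : F.Nonempty)
    (A B : ℝ)
    (hA : A = (M : ℝ) * Finset.univ.inf' ⟨(0 : ZMod M), Finset.mem_univ _⟩
      (fun m : ZMod M => ∑ k ∈ F, ‖g (m - k)‖ ^ 2))
    (hB : B = (M : ℝ) * Finset.univ.sup' ⟨(0 : ZMod M), Finset.mem_univ _⟩
      (fun m : ZMod M => ∑ k ∈ F, ‖g (m - k)‖ ^ 2)) :
    (∀ x : ZMod M → ℂ,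
        A * nsq M x ≤
            ∑ kl ∈ F ×ˢ (Finset.univ : Finset (ZMod M)),
              ‖inn M x (tfShift M kl.1 kl.2 g)‖ ^ 2 ∧
          ∑ kl ∈ F ×ˢ (Finset.univ : Finset (ZMod M)),
              ‖inn M x (tfShift M kl.1 kl.2 g)‖ ^ 2 ≤ B * nsq M x) ∧
      (∃ x : ZMod M → ℂ, x ≠ 0 ∧
        ∑ kl ∈ F ×ˢ (Finset.univ : Finset (ZMod M)),
            ‖inn M x (tfShift M kl.1 kl.2 g)‖ ^ 2 = A * nsq M x) ∧
      (∃ x' : ZMod M → ℂ, x' ≠ 0 ∧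
        ∑ kl ∈ F ×ˢ (Finset.univ : Finset (ZMod M)),
            ‖inn M x' (tfShift M kl.1 kl.2 g)‖ ^ 2 = B * nsq M x') :=
  stmt9_general M g F A B hA hB
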